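/- Let q ≥ 1 and let X, Y be positive definite n×n complex matrices with X ≤ Y < γX, where γ = 2^(1 - 1/q). Then there exist positive definite matrices A, B such that X = (A + B)/2 and Y = P_μ(q, A, B) := A^(1/2) ((I + (A^(-1/2) B A^(-1/2))^q)/2)^(1/q) A^(1/2). -/

import Mathlib

open scoped ComplexOrder

/-- The real power of a matrix, via the continuous functional calculus. -/
noncomputable def mpow {n : ℕ} (A : Matrix (Fin n) (Fin n) ℂ) (p : ℝ) :
    Matrix (Fin n) (Fin n) ℂ :=
  cfc (fun x : ℝ => x ^ p) A

/-- The Kubo–Ando matrix power mean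
`P_μ(q, A, B) = A^(1/2) ((I + (A^(-1/2) B A^(-1/2))^q)/2)^(1/q) A^(1/2)`. -/
noncomputable def Pmu {n : ℕ} (q : ℝ) (A B : Matrix (Fin n) (Fin n) ℂ) :
    Matrix (Fin n) (Fin n) ℂ :=
  mpow A (1 / 2) *
    mpow ((2 : ℂ)⁻¹ • (1 + mpow (mpow A (-(1 / 2)) * B * mpow A (-(1 / 2))) q)) (1 / q) *
    mpow A (1 / 2)

namespace KAaux

open Matrix

variable {n : ℕ}

local notation "Mat" => Matrix (Fin n) (Fin n) ℂ

lemma contOn (f : ℝ → ℝ) (A : Mat) : ContinuousOn f (spectrum ℝ A) :=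
  Matrix.finite_real_spectrum.continuousOn f

lemma contOn' (f g : ℝ → ℝ) (A : Mat) : ContinuousOn f (g '' spectrum ℝ A) :=
  (Matrix.finite_real_spectrum.image g).continuousOn f

lemma spec_pos {A : Mat} (hA : A.PosDef) : ∀ x ∈ spectrum ℝ A, 0 < x := by
  intro x hx
  rw [hA.isHermitian.spectrum_real_eq_range_eigenvalues] at hx
  obtain ⟨i, rfl⟩ := hx
  exact hA.eigenvalues_pos i

lemma spec_nonneg {A : Mat} (hA : A.PosSemidef) : ∀ x ∈ spectrum ℝ A, 0 ≤ x := by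
  intro x hx
  rw [hA.isHermitian.spectrum_real_eq_range_eigenvalues] at hx
  obtain ⟨i, rfl⟩ := hx
  exact hA.eigenvalues_nonneg i

lemma posDef_conj {P T : Mat} (hP : P.PosDef) (hT : IsUnit T) : (Tᴴ * P * T).PosDef := by
  exact hP.conjTranspose_mul_mul_same (Matrix.mulVec_injective_iff_isUnit.mpr hT)

lemma posDef_of_spec {A : Mat} (hA : A.IsHermitian) (h : ∀ x ∈ spectrum ℝ A, 0 < x) :
    A.PosDef := by
  have hD : (Matrix.diagonal (RCLike.ofReal ∘ hA.eigenvalues) : Mat).PosDef := by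
    rw [Matrix.posDef_diagonal_iff]
    intro i
    have := h _ (hA.eigenvalues_mem_spectrum_real i)
    simpa [Function.comp, Complex.zero_lt_real] using this
  have hU : IsUnit (star (hA.eigenvectorUnitary : Mat)) :=
    isUnit_iff_exists.mpr ⟨(hA.eigenvectorUnitary : Mat),
      Unitary.star_mul_self_of_mem hA.eigenvectorUnitary.prop,
      Unitary.mul_star_self_of_mem hA.eigenvectorUnitary.prop⟩
  have h2 := posDef_conj hD hU
  rw [Matrix.star_eq_conjTranspose, Matrix.conjTranspose_conjTranspose] at h2
  rw [hA.spectral_theorem]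
  exact h2

lemma mpow_isSelfAdjoint (A : Mat) (p : ℝ) : IsSelfAdjoint (mpow A p) :=
  cfc_predicate _ _

lemma mpow_conjTranspose (A : Mat) (p : ℝ) : (mpow A p)ᴴ = mpow A p := by
  rw [← Matrix.star_eq_conjTranspose]
  exact (mpow_isSelfAdjoint A p).star_eq

lemma mpow_mul_mpow {A : Mat} (hA : A.PosDef) (p r : ℝ) :
    mpow A p * mpow A r = mpow A (p + r) := by
  have ha : IsSelfAdjoint A := hA.isHermitian
  rw [mpow, mpow, mpow, ← cfc_mul _ _ A (contOn _ _) (contOn _ _)]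
  exact cfc_congr fun x hx => (Real.rpow_add (spec_pos hA x hx) p r).symm

lemma mpow_one' {A : Mat} (hA : A.PosDef) : mpow A 1 = A := by
  have ha : IsSelfAdjoint A := hA.isHermitian
  rw [mpow]
  calc cfc (fun x : ℝ => x ^ (1:ℝ)) A = cfc (id : ℝ → ℝ) A :=
        cfc_congr fun x _ => Real.rpow_one x
    _ = A := cfc_id ℝ A

lemma mpow_zero' {A : Mat} (hA : A.PosDef) : mpow A 0 = 1 := by
  have ha : IsSelfAdjoint A := hA.isHermitian
  rw [mpow]
  calc cfc (fun x : ℝ => x ^ (0:ℝ)) A = cfc (1 : ℝ → ℝ) A :=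
        cfc_congr fun x _ => Real.rpow_zero x
    _ = 1 := cfc_one ℝ A

lemma mpow_posDef {A : Mat} (hA : A.PosDef) (p : ℝ) : (mpow A p).PosDef := by
  refine posDef_of_spec (mpow_isSelfAdjoint A p) ?_
  intro x hx
  rw [mpow, cfc_map_spectrum (fun x : ℝ => x ^ p) A hA.isHermitian.isSelfAdjoint
    (contOn _ _)] at hx
  obtain ⟨y, hy, rfl⟩ := hx
  exact Real.rpow_pos_of_pos (spec_pos hA y hy) p

lemma mpow_half_mul_half {A : Mat} (hA : A.PosDef) :
    mpow A (1/2) * mpow A (1/2) = A := by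
  rw [mpow_mul_mpow hA]
  norm_num [mpow_one' hA]

lemma mpow_half_mul_neg_half {A : Mat} (hA : A.PosDef) :
    mpow A (1/2) * mpow A (-(1/2)) = 1 := by
  rw [mpow_mul_mpow hA]
  norm_num [mpow_zero' hA]

lemma mpow_neg_half_mul_half {A : Mat} (hA : A.PosDef) :
    mpow A (-(1/2)) * mpow A (1/2) = 1 := by
  rw [mpow_mul_mpow hA]
  norm_num [mpow_zero' hA]

/-- Conjugation by a unitary matrix as a star algebra homomorphism. -/
noncomputable def conjSAH (U : Mat) (hU : U * Uᴴ = 1) : Mat →⋆ₐ[ℂ] Mat where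
  toFun P := U * P * Uᴴ
  map_one' := by show U * 1 * Uᴴ = 1; rw [mul_one, hU]
  map_mul' P Q := by
    have hU' : Uᴴ * U = 1 := mul_eq_one_comm.mp hU
    calc U * (P * Q) * Uᴴ = (U * P) * (Uᴴ * U) * (Q * Uᴴ) := by rw [hU']; noncomm_ring
      _ = U * P * Uᴴ * (U * Q * Uᴴ) := by noncomm_ring
  map_zero' := by simp
  map_add' P Q := by noncomm_ring
  commutes' c := by
    show U * algebraMap ℂ Mat c * Uᴴ = algebraMap ℂ Mat c
    rw [Algebra.algebraMap_eq_smul_one, Matrix.mul_smul, mul_one, Matrix.smul_mul, hU]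
  map_star' P := by
    simp only [Matrix.star_eq_conjTranspose, Matrix.conjTranspose_mul,
      Matrix.conjTranspose_conjTranspose, mul_assoc]

lemma cfc_conj_unitary {U : Mat} (hU : U * Uᴴ = 1) (f : ℝ → ℝ) (P : Mat)
    (hP : IsSelfAdjoint P) :
    cfc f (U * P * Uᴴ) = U * cfc f P * Uᴴ := by
  have hcont : Continuous (⇑(conjSAH U hU)) := by
    show Continuous fun P : Mat => U * P * Uᴴ
    exact (continuous_const.matrix_mul continuous_id).matrix_mul continuous_const
  have hsa : IsSelfAdjoint (U * P * Uᴴ) := by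
    rw [_root_.IsSelfAdjoint, Matrix.star_eq_conjTranspose, Matrix.conjTranspose_mul,
      Matrix.conjTranspose_mul, Matrix.conjTranspose_conjTranspose]
    rw [show Pᴴ = P from hP.star_eq, mul_assoc]
  have := StarAlgHomClass.map_cfc (conjSAH U hU) f P (contOn f P) hcont hP hsa
  simpa [conjSAH] using this.symm

lemma scalar_exists {q : ℝ} (hq : 1 ≤ q) {z : ℝ} (h1 : 1 ≤ z)
    (h2 : z < (2:ℝ) ^ (1 - 1/q)) :
    ∃ t, 1 ≤ t ∧ t < 2 ∧ t ^ q + (2 - t) ^ q = 2 * z ^ q := by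
  have hq0 : (0:ℝ) < q := lt_of_lt_of_le one_pos hq
  set h : ℝ → ℝ := fun t => t ^ q + (2 - t) ^ q with hh
  have hcont : Continuous h := by
    have c1 : Continuous fun t : ℝ => t ^ q := by
      rw [continuous_iff_continuousAt]
      exact fun x => Real.continuousAt_rpow_const x q (Or.inr hq0.le)
    have c2 : Continuous fun t : ℝ => (2 - t) ^ q :=
      c1.comp (continuous_const.sub continuous_id)
    exact c1.add c2
  have hIVT : Set.Ico (h 1) (h 2) ⊆ h '' Set.Ico 1 2 :=
    intermediate_value_Ico (by norm_num) hcont.continuousOn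
  have hh1 : h 1 = 2 := by norm_num [hh, Real.one_rpow]
  have hh2 : h 2 = 2 ^ q := by
    simp [hh, Real.zero_rpow (ne_of_gt hq0)]
  have hmem : 2 * z ^ q ∈ Set.Ico (h 1) (h 2) := by
    rw [hh1, hh2]
    constructor
    · have : (1:ℝ) ≤ z ^ q := by
        calc (1:ℝ) = 1 ^ q := (Real.one_rpow q).symm
          _ ≤ z ^ q := Real.rpow_le_rpow (by norm_num) h1 (le_of_lt hq0)
      linarith
    · have hzq : z ^ q < ((2:ℝ) ^ (1 - 1/q)) ^ q :=
        Real.rpow_lt_rpow (by linarith) h2 hq0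
      have heq : ((2:ℝ) ^ (1 - 1/q)) ^ q = 2 ^ (q - 1) := by
        rw [← Real.rpow_mul (by norm_num : (0:ℝ) ≤ 2)]
        congr 1
        field_simp
      have h2q : (2:ℝ) * 2 ^ (q - 1) = 2 ^ q := by
        rw [show q = 1 + (q - 1) by ring, Real.rpow_add (by norm_num : (0:ℝ) < 2),
          Real.rpow_one]
        ring_nf
      rw [heq] at hzq
      calc 2 * z ^ q < 2 * 2 ^ (q-1) := by linarith
        _ = 2 ^ q := h2q
  obtain ⟨t, ht, hteq⟩ := hIVT hmem
  exact ⟨t, ht.1, ht.2, hteq⟩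

lemma ofReal_smul_mat (r : ℝ) (M : Mat) : ((r : ℝ) : ℂ) • M = r • M := by
  rw [← algebraMap_smul ℂ r M, Complex.coe_algebraMap]

end KAaux

theorem inverse_problem_kubo_ando_power_mean {n : ℕ} (q : ℝ) (hq : 1 ≤ q)
    {X Y : Matrix (Fin n) (Fin n) ℂ} (hX : X.PosDef) (hY : Y.PosDef)
    (hXY : (Y - X).PosSemidef)
    (hstrict : ((((2 : ℝ) ^ (1 - 1 / q) : ℝ) : ℂ) • X - Y).PosDef) :
    ∃ A B : Matrix (Fin n) (Fin n) ℂ, A.PosDef ∧ B.PosDef ∧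
      (2 : ℂ)⁻¹ • (A + B) = X ∧ Y = Pmu q A B := by
  classical
  open KAaux Matrix in
  have hq0 : (0:ℝ) < q := lt_of_lt_of_le one_pos hq
  set γ : ℝ := (2:ℝ) ^ (1 - 1/q) with hγdef
  set R : Matrix (Fin n) (Fin n) ℂ := mpow X (1/2) with hRdef
  set Ri : Matrix (Fin n) (Fin n) ℂ := mpow X (-(1/2)) with hRidef
  have hRpd : R.PosDef := KAaux.mpow_posDef hX (1/2)
  have hRipd : Ri.PosDef := KAaux.mpow_posDef hX (-(1/2))
  have hRRi : R * Ri = 1 := KAaux.mpow_half_mul_neg_half hX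
  have hRiR : Ri * R = 1 := KAaux.mpow_neg_half_mul_half hX
  have hRR : R * R = X := KAaux.mpow_half_mul_half hX
  have hRH : Rᴴ = R := KAaux.mpow_conjTranspose X _
  have hRiH : Riᴴ = Ri := KAaux.mpow_conjTranspose X _
  have hRiunit : IsUnit Ri := isUnit_iff_exists.mpr ⟨R, hRiR, hRRi⟩
  have hRunit : IsUnit R := isUnit_iff_exists.mpr ⟨Ri, hRRi, hRiR⟩
  have hRiX : Ri * X * Ri = 1 := by
    have hXRi : X * Ri = R := by
      calc X * Ri = mpow X 1 * mpow X (-(1/2)) := by rw [KAaux.mpow_one' hX]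
        _ = mpow X (1/2) := by rw [KAaux.mpow_mul_mpow hX]; norm_num
    rw [mul_assoc, hXRi, hRiR]
  set Z := Ri * Y * Ri with hZdef
  have hZpd : Z.PosDef := by
    have := KAaux.posDef_conj hY hRiunit
    rwa [hRiH] at this
  have hZsa : IsSelfAdjoint Z := hZpd.isHermitian
  -- spectrum of Z lies in [1, γ)
  have hZ1 : (Z - 1).PosSemidef := by
    have h := hXY.conjTranspose_mul_mul_same Ri
    rw [hRiH] at h
    have he : Ri * (Y - X) * Ri = Z - 1 := by
      rw [mul_sub, sub_mul, hZdef, hRiX]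
    rwa [he] at h
  have hγZ : ((γ:ℂ) • (1:Matrix (Fin n) (Fin n) ℂ) - Z).PosDef := by
    have h := KAaux.posDef_conj hstrict hRiunit
    rw [hRiH] at h
    have he : Ri * (((γ:ℝ):ℂ) • X - Y) * Ri
        = (γ:ℂ) • (1:Matrix (Fin n) (Fin n) ℂ) - Z := by
      rw [mul_sub, sub_mul, hZdef, Matrix.mul_smul, Matrix.smul_mul, hRiX]
    rwa [he] at h
  have hspec : ∀ x ∈ spectrum ℝ Z, 1 ≤ x ∧ x < γ := by
    intro x hx
    constructor
    · have hsub : Z - (1:Matrix (Fin n) (Fin n) ℂ) = cfc (fun t : ℝ => t - 1) Z := by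
        have h := cfc_sub (fun t : ℝ => t) (fun _ : ℝ => 1) Z
          (KAaux.contOn _ _) (KAaux.contOn _ _)
        rw [cfc_id' ℝ Z, cfc_const 1 Z, _root_.map_one] at h
        exact h.symm
      have hmem : x - 1 ∈ spectrum ℝ (Z - 1) := by
        rw [hsub, cfc_map_spectrum _ Z hZsa (KAaux.contOn _ _)]
        exact ⟨x, hx, rfl⟩
      have := KAaux.spec_nonneg hZ1 _ hmem
      linarith
    · have hsub : (γ:ℂ) • (1:Matrix (Fin n) (Fin n) ℂ) - Z
          = cfc (fun t : ℝ => γ - t) Z := by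
        have h := cfc_sub (fun _ : ℝ => γ) (fun t : ℝ => t) Z
          (KAaux.contOn _ _) (KAaux.contOn _ _)
        rw [cfc_id' ℝ Z, cfc_const γ Z, Algebra.algebraMap_eq_smul_one] at h
        rw [KAaux.ofReal_smul_mat]
        exact h.symm
      have hmem : γ - x ∈ spectrum ℝ ((γ:ℂ) • (1:Matrix (Fin n) (Fin n) ℂ) - Z) := by
        rw [hsub, cfc_map_spectrum _ Z hZsa (KAaux.contOn _ _)]
        exact ⟨x, hx, rfl⟩
      have := KAaux.spec_pos hγZ _ hmem
      linarith
  -- the scalar solution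
  have hex : ∀ z ∈ spectrum ℝ Z, ∃ t, 1 ≤ t ∧ t < 2 ∧ t ^ q + (2-t) ^ q = 2 * z ^ q :=
    fun z hz => KAaux.scalar_exists hq (hspec z hz).1 (hspec z hz).2
  set a : ℝ → ℝ := fun z => if hz : z ∈ spectrum ℝ Z then (hex z hz).choose else 1
    with hadef
  have ha1 : ∀ z, 1 ≤ a z := by
    intro z
    rw [hadef]
    dsimp only
    split_ifs with hz
    · exact (hex z hz).choose_spec.1
    · exact le_refl 1
  have ha2 : ∀ z, a z < 2 := by
    intro z
    rw [hadef]
    dsimp only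
    split_ifs with hz
    · exact (hex z hz).choose_spec.2.1
    · norm_num
  have hapos : ∀ z, 0 < a z := fun z => lt_of_lt_of_le one_pos (ha1 z)
  have haeq : ∀ z ∈ spectrum ℝ Z, (a z) ^ q + (2 - a z) ^ q = 2 * z ^ q := by
    intro z hz
    rw [hadef]
    dsimp only
    rw [dif_pos hz]
    exact (hex z hz).choose_spec.2.2
  -- the matrices
  set Aa := cfc a Z with hAadef
  set Bb := cfc (fun z => 2 - a z) Z with hBbdef
  have hAasa : IsSelfAdjoint Aa := cfc_predicate _ _
  have hBbsa : IsSelfAdjoint Bb := cfc_predicate _ _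
  have hAapd : Aa.PosDef := by
    refine KAaux.posDef_of_spec hAasa ?_
    intro x hx
    rw [hAadef, cfc_map_spectrum a Z hZsa (KAaux.contOn _ _)] at hx
    obtain ⟨y, _, rfl⟩ := hx
    exact hapos y
  have hBbpd : Bb.PosDef := by
    refine KAaux.posDef_of_spec hBbsa ?_
    intro x hx
    rw [hBbdef, cfc_map_spectrum _ Z hZsa (KAaux.contOn _ _)] at hx
    obtain ⟨y, _, rfl⟩ := hx
    have := ha2 y
    simp only []
    linarith
  have hApd : (R * Aa * R).PosDef := by
    have := KAaux.posDef_conj hAapd hRunit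
    rwa [hRH] at this
  have hBpd : (R * Bb * R).PosDef := by
    have := KAaux.posDef_conj hBbpd hRunit
    rwa [hRH] at this
  refine ⟨R * Aa * R, R * Bb * R, hApd, hBpd, ?_, ?_⟩
  · -- arithmetic mean
    have hsum : Aa + Bb = (2:ℝ) • (1 : Matrix (Fin n) (Fin n) ℂ) := by
      rw [hAadef, hBbdef, ← cfc_add Z a _ (KAaux.contOn _ _) (KAaux.contOn _ _)]
      calc cfc (fun z => a z + (2 - a z)) Z = cfc (fun _ : ℝ => (2:ℝ)) Z :=
            cfc_congr fun x _ => by ring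
        _ = (2:ℝ) • 1 := by rw [cfc_const 2 Z hZsa, Algebra.algebraMap_eq_smul_one]
    have : R * Aa * R + R * Bb * R = (2:ℝ) • X := by
      calc R * Aa * R + R * Bb * R = R * (Aa + Bb) * R := by noncomm_ring
        _ = R * ((2:ℝ) • 1) * R := by rw [hsum]
        _ = (2:ℝ) • (R * R) := by
            rw [Matrix.mul_smul, mul_one, Matrix.smul_mul]
        _ = (2:ℝ) • X := by rw [hRR]
    rw [this, ← KAaux.ofReal_smul_mat 2 X, smul_smul]
    norm_num
  · -- Y = Pmu q A B
    set Ra := mpow (R * Aa * R) (1/2) with hRadef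
    set Si := mpow (R * Aa * R) (-(1/2)) with hSidef
    have hRaRa : Ra * Ra = R * Aa * R := KAaux.mpow_half_mul_half hApd
    have hRaSi : Ra * Si = 1 := KAaux.mpow_half_mul_neg_half hApd
    have hSiRa : Si * Ra = 1 := KAaux.mpow_neg_half_mul_half hApd
    have hSiH : Siᴴ = Si := KAaux.mpow_conjTranspose _ _
    set sq : Matrix (Fin n) (Fin n) ℂ := cfc (fun z => a z ^ ((1:ℝ)/2)) Z with hsqdef
    have hsqsa : IsSelfAdjoint sq := cfc_predicate _ _
    have hsqH : sqᴴ = sq := by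
      rw [← Matrix.star_eq_conjTranspose]; exact hsqsa.star_eq
    have hsq_pt : ∀ x : ℝ, a x ^ ((1:ℝ)/2) * a x ^ ((1:ℝ)/2) = a x := by
      intro x
      rw [← Real.rpow_add (hapos x)]
      norm_num
    have hsqsq : sq * sq = Aa := by
      rw [hsqdef, hAadef, ← cfc_mul _ _ Z (KAaux.contOn _ _) (KAaux.contOn _ _)]
      exact cfc_congr fun x _ => hsq_pt x
    set U := Si * (R * sq) with hUdef
    have hUH : Uᴴ = (sq * R) * Si := by
      rw [hUdef, Matrix.conjTranspose_mul, Matrix.conjTranspose_mul, hsqH, hRH, hSiH]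
    have hUUH : U * Uᴴ = 1 := by
      rw [hUdef, hUH]
      calc Si * (R * sq) * (sq * R * Si) = Si * (R * (sq * sq) * R) * Si := by noncomm_ring
        _ = Si * (Ra * Ra) * Si := by rw [hsqsq, hRaRa]
        _ = (Si * Ra) * (Ra * Si) := by noncomm_ring
        _ = 1 := by rw [hSiRa, hRaSi, one_mul]
    have hRaU : Ra * U = R * sq := by
      rw [hUdef, ← mul_assoc, hRaSi, one_mul]
    have hUHRa : Uᴴ * Ra = sq * R := by
      rw [hUH, mul_assoc, hSiRa, mul_one]
    set gb : ℝ → ℝ := fun z => (2 - a z) / a z with hgbdef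
    set Cb := cfc gb Z with hCbdef
    have hCbsa : IsSelfAdjoint Cb := cfc_predicate _ _
    have hBeq : R * Bb * R = (R * sq) * Cb * (sq * R) := by
      have h1 : sq * Cb * sq = Bb := by
        rw [hsqdef, hCbdef, hBbdef, ← cfc_mul _ _ Z (KAaux.contOn _ _) (KAaux.contOn _ _),
          ← cfc_mul _ _ Z (KAaux.contOn _ _) (KAaux.contOn _ _)]
        refine cfc_congr fun x _ => ?_
        calc a x ^ ((1:ℝ)/2) * gb x * a x ^ ((1:ℝ)/2)
            = (a x ^ ((1:ℝ)/2) * a x ^ ((1:ℝ)/2)) * gb x := by ring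
          _ = a x * ((2 - a x) / a x) := by rw [hsq_pt x, hgbdef]
          _ = 2 - a x := by
              rw [mul_div_assoc']
              exact mul_div_cancel_left₀ _ (ne_of_gt (hapos x))
      calc R * Bb * R = R * (sq * Cb * sq) * R := by rw [h1]
        _ = (R * sq) * Cb * (sq * R) := by noncomm_ring
    have hPmu_unfold : Pmu q (R*Aa*R) (R*Bb*R)
        = Ra * mpow ((2:ℂ)⁻¹ • (1 + mpow (Si * (R*Bb*R) * Si) q)) (1/q) * Ra := rfl
    have hMconj : Si * (R*Bb*R) * Si = U * Cb * Uᴴ := by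
      rw [hBeq, hUdef, hUH]
      noncomm_ring
    set k1 : ℝ → ℝ := fun z => gb z ^ q with hk1def
    have hinner : mpow (U * Cb * Uᴴ) q = U * cfc k1 Z * Uᴴ := by
      rw [mpow, KAaux.cfc_conj_unitary hUUH _ Cb hCbsa, hCbdef,
        ← cfc_comp (fun x : ℝ => x ^ q) gb Z hZsa (KAaux.contOn' _ _ _) (KAaux.contOn _ _)]
      rfl
    set k2 : ℝ → ℝ := fun z => (2:ℝ)⁻¹ * (1 + k1 z) with hk2def
    have hk2 : (2:ℂ)⁻¹ • (1 + U * cfc k1 Z * Uᴴ) = U * cfc k2 Z * Uᴴ := by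
      have e1 : cfc k2 Z = (2:ℝ)⁻¹ • (1 + cfc k1 Z) := by
        have h := cfc_smul ((2:ℝ)⁻¹) (fun z => 1 + k1 z) Z (KAaux.contOn _ _)
        rw [cfc_add Z (fun _ => (1:ℝ)) k1 (KAaux.contOn _ _) (KAaux.contOn _ _),
          cfc_const 1 Z hZsa, _root_.map_one] at h
        rw [hk2def, ← h]
        exact cfc_congr fun x _ => by simp [smul_eq_mul]
      rw [e1]
      calc (2:ℂ)⁻¹ • (1 + U * cfc k1 Z * Uᴴ)
          = (2:ℂ)⁻¹ • (U * (1 + cfc k1 Z) * Uᴴ) := by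
            rw [mul_add, add_mul, mul_one, hUUH]
        _ = U * ((2:ℂ)⁻¹ • (1 + cfc k1 Z)) * Uᴴ := by
            rw [Matrix.mul_smul, Matrix.smul_mul]
        _ = U * ((2:ℝ)⁻¹ • (1 + cfc k1 Z)) * Uᴴ := by
            rw [← KAaux.ofReal_smul_mat]
            norm_num
    set k3 : ℝ → ℝ := fun z => k2 z ^ ((1:ℝ)/q) with hk3def
    have hk2sa : IsSelfAdjoint (cfc k2 Z) := cfc_predicate _ _
    have houter : mpow (U * cfc k2 Z * Uᴴ) (1/q) = U * cfc k3 Z * Uᴴ := by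
      rw [mpow, KAaux.cfc_conj_unitary hUUH _ _ hk2sa,
        ← cfc_comp (fun x : ℝ => x ^ ((1:ℝ)/q)) k2 Z hZsa (KAaux.contOn' _ _ _)
          (KAaux.contOn _ _)]
      rfl
    have hfinal : Pmu q (R*Aa*R) (R*Bb*R) = R * (sq * cfc k3 Z * sq) * R := by
      rw [hPmu_unfold, hMconj, hinner, hk2, houter]
      calc Ra * (U * cfc k3 Z * Uᴴ) * Ra = (Ra * U) * cfc k3 Z * (Uᴴ * Ra) := by noncomm_ring
        _ = (R * sq) * cfc k3 Z * (sq * R) := by rw [hRaU, hUHRa]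
        _ = R * (sq * cfc k3 Z * sq) * R := by noncomm_ring
    have hmid : sq * cfc k3 Z * sq = Z := by
      rw [hsqdef, ← cfc_mul _ _ Z (KAaux.contOn _ _) (KAaux.contOn _ _),
        ← cfc_mul _ _ Z (KAaux.contOn _ _) (KAaux.contOn _ _)]
      have : cfc (fun x => a x ^ ((1:ℝ)/2) * k3 x * a x ^ ((1:ℝ)/2)) Z
          = cfc (id : ℝ → ℝ) Z := by
        refine cfc_congr fun x hx => ?_
        have h1x : 1 ≤ x := (hspec x hx).1
        have hx0 : (0:ℝ) ≤ x := by linarith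
        have hax := hapos x
        have hbx : (0:ℝ) < 2 - a x := by linarith [ha2 x]
        have key := haeq x hx
        have hq' : q ≠ 0 := ne_of_gt hq0
        have haq : a x ^ q ≠ 0 := ne_of_gt (Real.rpow_pos_of_pos hax q)
        have hk2x : (0:ℝ) ≤ k2 x := by
          rw [hk2def, hk1def, hgbdef]
          dsimp only
          positivity
        have e3 : a x ^ q * k2 x = x ^ q := by
          rw [hk2def, hk1def, hgbdef]
          dsimp only
          rw [Real.div_rpow hbx.le hax.le]
          calc a x ^ q * ((2:ℝ)⁻¹ * (1 + (2 - a x) ^ q / a x ^ q))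
              = (2:ℝ)⁻¹ * (a x ^ q + a x ^ q * ((2 - a x) ^ q / a x ^ q)) := by ring
            _ = (2:ℝ)⁻¹ * (a x ^ q + (2 - a x) ^ q) := by
                rw [mul_div_cancel₀ _ haq]
            _ = x ^ q := by rw [key]; ring
        have e4 : (a x ^ q) ^ ((1:ℝ)/q) = a x := by
          rw [← Real.rpow_mul hax.le, mul_one_div, div_self hq', Real.rpow_one]
        show a x ^ ((1:ℝ)/2) * k3 x * a x ^ ((1:ℝ)/2) = x
        calc a x ^ ((1:ℝ)/2) * k3 x * a x ^ ((1:ℝ)/2)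
            = (a x ^ ((1:ℝ)/2) * a x ^ ((1:ℝ)/2)) * k3 x := by ring
          _ = a x * k2 x ^ ((1:ℝ)/q) := by rw [hsq_pt x, hk3def]
          _ = (a x ^ q) ^ ((1:ℝ)/q) * k2 x ^ ((1:ℝ)/q) := by rw [e4]
          _ = (a x ^ q * k2 x) ^ ((1:ℝ)/q) := by
              rw [← Real.mul_rpow (Real.rpow_nonneg hax.le q) hk2x]
          _ = (x ^ q) ^ ((1:ℝ)/q) := by rw [e3]
          _ = x := by rw [← Real.rpow_mul hx0, mul_one_div, div_self hq', Real.rpow_one]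
      rw [this, cfc_id ℝ Z hZsa]
    have hRZR : R * Z * R = Y := by
      rw [hZdef]
      calc R * (Ri * Y * Ri) * R = (R * Ri) * Y * (Ri * R) := by noncomm_ring
        _ = Y := by rw [hRRi, hRiR, one_mul, mul_one]
    rw [hfinal, hmid, hRZR]
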